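/- Let U ⊆ ℝ² be open and r : U → ℝ³ a smooth isothermal parametrization of a regular surface: ∂_u r · ∂_v r = 0 and ‖∂_u r‖ = ‖∂_v r‖ = ρ(u,v) > 0 on U. Fix B ∈ ℝ, and let (u, v, α) : I → ℝ³ be a differentiable solution of the characteristic system u̇ = (cos α − B sin α)/ρ, v̇ = (sin α + B cos α)/ρ, α̇ = −(cos α − B sin α) c_u − (sin α + B cos α) c_v, where e_u := ∂_u r/ρ, e_v := ∂_v r/ρ, ν := e_u × e_v, c_u := (1/ρ) e_v · ∂_u e_u, c_v := (1/ρ) e_v · ∂_v e_u, all evaluated at (u(t), v(t)). Let x(t) := r(u(t), v(t)), T := ẋ/√(B²+1), T⊥ := ν × T, and n(t) := cos α(t) e_u + sin α(t) e_v. Then for all t ∈ I: n · T = 1/√(B² + 1) and n · T⊥ = −B/√(B² + 1); in particular, n makes the constant angle γ = −arctan B with the tangent of the characteristic curve. -/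

import Mathlib

/-!
STATEMENT 8: Along the characteristic lines of the quasi-uniformity equation,
the director n = cos α e_u + sin α e_v makes a constant angle with the unit
tangent T = ẋ/√(B²+1): n · T = 1/√(B²+1) and n · (ν × T) = −B/√(B²+1), i.e.
γ = −arctan B.
-/

/-- Three-dimensional Euclidean space. -/
abbrev R3 : Type := Fin 3 → ℝ

/-- The standard dot product on ℝ³. -/
noncomputable def dot3 (a b : R3) : ℝ := a 0 * b 0 + a 1 * b 1 + a 2 * b 2

/-- The cross product on ℝ³. -/
noncomputable def cross3 (a b : R3) : R3 :=
  ![a 1 * b 2 - a 2 * b 1, a 2 * b 0 - a 0 * b 2, a 0 * b 1 - a 1 * b 0]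

/-- The Euclidean norm on ℝ³. -/
noncomputable def norm3 (a : R3) : ℝ := Real.sqrt (dot3 a a)


lemma dot3_self_nonneg (a : R3) : 0 ≤ dot3 a a := by
  unfold dot3; nlinarith [sq_nonneg (a 0), sq_nonneg (a 1), sq_nonneg (a 2)]

lemma dot3_smul_left (k : ℝ) (a b : R3) : dot3 (k • a) b = k * dot3 a b := by
  simp [dot3]; ring

lemma dot3_smul_right (k : ℝ) (a b : R3) : dot3 a (k • b) = k * dot3 a b := by
  simp [dot3]; ring

lemma dot3_add_left (a b c : R3) : dot3 (a + b) c = dot3 a c + dot3 b c := by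
  simp [dot3]; ring

lemma dot3_add_right (a b c : R3) : dot3 a (b + c) = dot3 a b + dot3 a c := by
  simp [dot3]; ring

lemma dot3_comm (a b : R3) : dot3 a b = dot3 b a := by simp [dot3]; ring

lemma dot3_triple (w a b z : R3) :
    dot3 w (cross3 (cross3 a b) z) = dot3 a z * dot3 b w - dot3 b z * dot3 a w := by
  simp [dot3, cross3, Matrix.cons_val_zero, Matrix.cons_val_one, Matrix.head_cons]
  ring

theorem characteristic_constant_angle
    (U : Set (ℝ × ℝ)) (hU : IsOpen U)
    (r : ℝ × ℝ → R3) (ρ : ℝ × ℝ → ℝ)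
    (hr : ContDiffOn ℝ (⊤ : ℕ∞) r U)
    (hρpos : ∀ p ∈ U, 0 < ρ p)
    (hiso : ∀ p ∈ U, dot3 (fderiv ℝ r p (1, 0)) (fderiv ℝ r p (0, 1)) = 0)
    (hnu : ∀ p ∈ U, norm3 (fderiv ℝ r p (1, 0)) = ρ p)
    (hnv : ∀ p ∈ U, norm3 (fderiv ℝ r p (0, 1)) = ρ p)
    (eu ev νs : ℝ × ℝ → R3) (cu cv : ℝ × ℝ → ℝ)
    (heu : ∀ p, eu p = (ρ p)⁻¹ • fderiv ℝ r p (1, 0))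
    (hev : ∀ p, ev p = (ρ p)⁻¹ • fderiv ℝ r p (0, 1))
    (hνs : ∀ p, νs p = cross3 (eu p) (ev p))
    (hcu : ∀ p, cu p = (ρ p)⁻¹ * dot3 (ev p) (fderiv ℝ eu p (1, 0)))
    (hcv : ∀ p, cv p = (ρ p)⁻¹ * dot3 (ev p) (fderiv ℝ eu p (0, 1)))
    (B : ℝ) (I : Set ℝ) (u v α : ℝ → ℝ)
    (hmem : ∀ t ∈ I, (u t, v t) ∈ U)
    (hu : ∀ t ∈ I, HasDerivAt u
      ((Real.cos (α t) - B * Real.sin (α t)) / ρ (u t, v t)) t)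
    (hv : ∀ t ∈ I, HasDerivAt v
      ((Real.sin (α t) + B * Real.cos (α t)) / ρ (u t, v t)) t)
    (hα : ∀ t ∈ I, HasDerivAt α
      (-(Real.cos (α t) - B * Real.sin (α t)) * cu (u t, v t)
        - (Real.sin (α t) + B * Real.cos (α t)) * cv (u t, v t)) t)
    (x : ℝ → R3) (hx : ∀ s, x s = r (u s, v s))
    (T Tperp n : ℝ → R3)
    (hT : ∀ s, T s = (Real.sqrt (B ^ 2 + 1))⁻¹ • deriv x s)
    (hTperp : ∀ s, Tperp s = cross3 (νs (u s, v s)) (T s))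
    (hn : ∀ s, n s = Real.cos (α s) • eu (u s, v s) + Real.sin (α s) • ev (u s, v s)) :
    ∀ t ∈ I, dot3 (n t) (T t) = 1 / Real.sqrt (B ^ 2 + 1) ∧
      dot3 (n t) (Tperp t) = -B / Real.sqrt (B ^ 2 + 1) := by

  intro t ht
  have hpU := hmem t ht
  set p : ℝ × ℝ := (u t, v t) with hp
  have hrd : HasFDerivAt r (fderiv ℝ r p) p :=
    ((hr.differentiableOn (by simp)).differentiableAt (hU.mem_nhds hpU)).hasFDerivAt
  have huv : HasDerivAt (fun s => (u s, v s))
      ((Real.cos (α t) - B * Real.sin (α t)) / ρ p,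
       (Real.sin (α t) + B * Real.cos (α t)) / ρ p) t :=
    (hu t ht).prodMk (hv t ht)
  have hx' : HasDerivAt x
      (fderiv ℝ r p ((Real.cos (α t) - B * Real.sin (α t)) / ρ p,
       (Real.sin (α t) + B * Real.cos (α t)) / ρ p)) t := by
    have h := hrd.comp_hasDerivAt t huv
    have hfun : x = fun s => r (u s, v s) := funext hx
    rw [hfun]; exact h
  have hdx : deriv x t = ((Real.cos (α t) - B * Real.sin (α t)) / ρ p) •
      fderiv ℝ r p (1, 0) + ((Real.sin (α t) + B * Real.cos (α t)) / ρ p) •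
      fderiv ℝ r p (0, 1) := by
    rw [hx'.deriv]
    have h : ((Real.cos (α t) - B * Real.sin (α t)) / ρ p,
       (Real.sin (α t) + B * Real.cos (α t)) / ρ p)
       = ((Real.cos (α t) - B * Real.sin (α t)) / ρ p) • ((1:ℝ), (0:ℝ))
       + ((Real.sin (α t) + B * Real.cos (α t)) / ρ p) • ((0:ℝ), (1:ℝ)) := by
      simp
    rw [h, map_add, map_smul, map_smul]
  set a : R3 := fderiv ℝ r p (1, 0) with ha
  set b : R3 := fderiv ℝ r p (0, 1) with hb
  have h1 : dot3 a b = 0 := hiso p hpU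
  have h1' : dot3 b a = 0 := by rw [dot3_comm]; exact h1
  have h2 : dot3 a a = ρ p ^ 2 := by
    rw [← hnu p hpU]; exact (Real.sq_sqrt (dot3_self_nonneg a)).symm
  have h3 : dot3 b b = ρ p ^ 2 := by
    rw [← hnv p hpU]; exact (Real.sq_sqrt (dot3_self_nonneg b)).symm
  have hρ0 : ρ p ≠ 0 := ne_of_gt (hρpos p hpU)
  have hs0 : Real.sqrt (B ^ 2 + 1) ≠ 0 :=
    ne_of_gt (Real.sqrt_pos.mpr (by positivity))
  have hcs : Real.sin (α t) ^ 2 + Real.cos (α t) ^ 2 = 1 := Real.sin_sq_add_cos_sq _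
  constructor
  · rw [hn, hT, hdx, heu, hev]
    rw [← hp, ← ha, ← hb]
    simp only [smul_add, smul_smul, dot3_add_left, dot3_add_right,
      dot3_smul_left, dot3_smul_right, h1, h1', h2, h3]
    field_simp
    linear_combination (ρ p ^ 2) * hcs
  · rw [hn, hTperp, hνs, hT, hdx, heu, hev, dot3_triple]
    rw [← hp, ← ha, ← hb]
    simp only [smul_add, smul_smul, dot3_add_left, dot3_add_right,
      dot3_smul_left, dot3_smul_right, h1, h1', h2, h3]
    field_simp
    linear_combination (-B * ρ p ^ 4) * hcs
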